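/- Let f ∈ S_k(SL₂(ℤ)) be a normalized Hecke eigenform, and let g₁, ..., g_{d₂} be the normalized Hecke eigenbasis of S_{2k}. If the stabilizer of f² in Gal(F₁F₂/ℚ) acts transitively on {g₁, ..., g_{d₂}}, then the Petersson inner product ⟨f², g_i⟩ ≠ 0 for every 1 ≤ i ≤ d₂. -/

import Mathlib

open UpperHalfPlane CongruenceSubgroup

/-- `F` is a normalized Hecke eigenform of weight `k` for `SL₂(ℤ)` with Fourier
coefficients `a`: its `q`-expansion is given by `a`, it is normalized (`a₁ = 1`), and its
coefficients satisfy the Hecke multiplicativity relations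
`a_m a_n = ∑_{d ∣ (m,n)} d^{k−1} a_{mn/d²}` (equivalently, `F` is a simultaneous
eigenform for all Hecke operators, normalized). -/
structure IsNormalizedEigenform (k : ℤ) (F : CuspForm (Gamma 1) k) (a : ℕ → ℂ) : Prop where
  fourier : ∀ z : ℍ, F z = ∑' n : ℕ, a n * Complex.exp (2 * Real.pi * Complex.I * n * z)
  normalized : a 1 = 1
  hecke : ∀ m n : ℕ, 0 < m → 0 < n →
    a m * a n = ∑ d ∈ (Nat.gcd m n).divisors, (d : ℂ) ^ (k - 1) * a (m * n / d ^ 2)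

/-- The Hecke field of a space of cusp forms: the subfield of `ℂ` generated over `ℚ` by
all Fourier coefficients (= Hecke eigenvalues) of the normalized eigenforms. -/
noncomputable def HeckeField {d : ℕ} (a : Fin d → ℕ → ℂ) : IntermediateField ℚ ℂ :=
  IntermediateField.adjoin ℚ {x : ℂ | ∃ (i : Fin d) (n : ℕ), x = a i n}

/-!
Write `f² = ∑ cᵢ gᵢ`. By orthogonality `⟨f², gᵢ⟩ = c̄ᵢ ⟨gᵢ, gᵢ⟩`, so it suffices that no `cᵢ`
vanishes. The Hecke relations make the coefficient sequences of distinct normalized eigenforms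
linearly independent (Dedekind's argument for characters), so `c` is the unique solution of a
linear system with coefficients in `F`, hence `c` has entries in `F`. An automorphism `σ` fixing
`f²` and sending `gₘ` to `g_{π m}` carries this system to its permuted version, so
`σ (cₘ) = c_{π m}`. By transitivity, one vanishing `cᵢ` forces `c = 0`, i.e. `f = 0`.
-/

theorem tsum_sub_tsum_eq_zero_or_eq {ι α : Type*} [AddCommGroup α] [TopologicalSpace α]
    [IsTopologicalAddGroup α] [T2Space α] {u v : ι → α} {δ : α} (h : HasSum (u - v) δ) :
    ∑' i, u i - ∑' i, v i = 0 ∨ ∑' i, u i - ∑' i, v i = δ := by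
  by_cases hv : Summable v
  · have hu : Summable u := by simpa using h.summable.add hv
    exact .inr (hu.tsum_sub hv ▸ h.tsum_eq)
  · have hu : ¬ Summable u := fun hu => hv (by simpa using hu.sub h.summable)
    exact .inl (by rw [tsum_eq_zero_of_not_summable hu, tsum_eq_zero_of_not_summable hv, sub_zero])

theorem eq_zero_of_isZeroAtImInfty_of_finite_range {h : ℍ → ℂ} (hc : Continuous h)
    (hfin : (Set.range h).Finite) (hzero : IsZeroAtImInfty h) : h = 0 := by
  have : Finite (Set.range h) := hfin
  obtain ⟨y, -, hy⟩ := isPreconnected_univ.eqOn_const_of_mapsTo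
    (isDiscrete_iff_discreteTopology.mpr inferInstance) hc.continuousOn
    (fun z _ => Set.mem_range_self z) (Set.range_nonempty h)
  have hy : h = Function.const ℍ y := funext fun z => hy (Set.mem_univ z)
  have hy0 : y = 0 := tendsto_const_nhds_iff.mp (hy ▸ hzero)
  rw [hy, hy0]
  rfl

theorem CuspForm.eq_of_coeff_eq {Γ : Subgroup (GL (Fin 2) ℝ)} [Fact (IsCusp OnePoint.infty Γ)]
    {k : ℤ} {F G : CuspForm Γ k} {a b : ℕ → ℂ}
    (hF : ∀ z : ℍ, F z = ∑' n : ℕ, a n * Complex.exp (2 * Real.pi * Complex.I * n * z))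
    (hG : ∀ z : ℍ, G z = ∑' n : ℕ, b n * Complex.exp (2 * Real.pi * Complex.I * n * z))
    (hab : ∀ n, n ≠ 0 → a n = b n) : F = G := by
  -- `∑'` is `0` on divergent series, so the expansions only pin `F - G` down to two values.
  have hval : ∀ z, (F - G) z = 0 ∨ (F - G) z = a 0 - b 0 := by
    intro z
    rw [sub_apply, hF, hG]
    refine tsum_sub_tsum_eq_zero_or_eq (hasSum_single 0 fun n hn => ?_) |>.imp id (by simp)
    simp [hab n hn]
  have hfin : (Set.range (F - G)).Finite := by
    refine (Set.toFinite {0, a 0 - b 0}).subset ?_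
    rintro _ ⟨z, rfl⟩
    exact hval z
  rw [← sub_eq_zero]
  exact DFunLike.coe_injective (eq_zero_of_isZeroAtImInfty_of_finite_range
    (F - G).holo'.continuous hfin (CuspFormClass.zero_at_infty _))

section HeckeRelations

variable {ι : Type*} [Fintype ι] {w : ℤ} {a : ι → ℕ → ℂ}

theorem sum_mul_coeff_mul_eq_zero
    (hhecke : ∀ i m n, 0 < m → 0 < n →
      a i m * a i n = ∑ e ∈ (Nat.gcd m n).divisors, (e : ℂ) ^ (w - 1) * a i (m * n / e ^ 2))
    {t : ι → ℂ} (ht : ∀ n, 0 < n → ∑ i, t i * a i n = 0) {m n : ℕ} (hm : 0 < m) (hn : 0 < n) :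
    ∑ i, t i * a i m * a i n = 0 := by
  have hpos : ∀ e ∈ (Nat.gcd m n).divisors, 0 < m * n / e ^ 2 := fun e he =>
    Nat.div_pos_iff.mpr ⟨pow_pos (Nat.pos_of_mem_divisors he) 2, Nat.le_of_dvd (by positivity)
      (pow_two e ▸ mul_dvd_mul ((Nat.dvd_of_mem_divisors he).trans (Nat.gcd_dvd_left m n))
        ((Nat.dvd_of_mem_divisors he).trans (Nat.gcd_dvd_right m n)))⟩
  calc ∑ i, t i * a i m * a i n
      = ∑ e ∈ (Nat.gcd m n).divisors, (e : ℂ) ^ (w - 1) * ∑ i, t i * a i (m * n / e ^ 2) := by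
        simp_rw [mul_assoc, hhecke _ m n hm hn, Finset.mul_sum]
        rw [Finset.sum_comm]
        exact Finset.sum_congr rfl fun _ _ => Finset.sum_congr rfl fun _ _ => by ring
    _ = 0 := Finset.sum_eq_zero fun e he => by rw [ht _ (hpos e he), mul_zero]

theorem eq_zero_of_sum_mul_coeff_eq_zero (hnorm : ∀ i, a i 1 = 1)
    (hhecke : ∀ i m n, 0 < m → 0 < n →
      a i m * a i n = ∑ e ∈ (Nat.gcd m n).divisors, (e : ℂ) ^ (w - 1) * a i (m * n / e ^ 2))
    (hdist : Pairwise fun i j => ∃ m, 0 < m ∧ a i m ≠ a j m)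
    (t : ι → ℂ) (ht : ∀ n, 0 < n → ∑ i, t i * a i n = 0) : t = 0 := by
  classical
  suffices ∀ s : Finset ι, ∀ t : ι → ℂ, (∀ i ∉ s, t i = 0) →
      (∀ n, 0 < n → ∑ i, t i * a i n = 0) → t = 0 from
    this .univ t (fun i hi => absurd (Finset.mem_univ i) hi) ht
  intro s
  induction s using Finset.strongInduction with
  | H s ih =>
  intro t hts ht
  by_contra hne
  obtain ⟨j, hj⟩ := Function.ne_iff.mp hne
  by_cases hsingle : ∀ i, i ≠ j → t i = 0
  · have h1 := ht 1 one_pos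
    rw [Finset.sum_eq_single j (fun i _ hi => by simp [hsingle i hi]) (by simp),
      hnorm, mul_one] at h1
    exact hj h1
  push Not at hsingle
  obtain ⟨i, hij, hi⟩ := hsingle
  obtain ⟨m, hm, hmij⟩ := hdist hij
  -- Dedekind's trick: `t i * (a i m - a j m)` is again a relation, with smaller support.
  have hsmaller : (fun l => t l * (a l m - a j m)) = 0 := by
    refine ih (s.erase j) (Finset.erase_ssubset (by_contra fun h => hj (hts j h))) _
      (fun l hl => ?_) (fun n hn => ?_)
    · rcases eq_or_ne l j with rfl | hlj
      · simp
      · simp [hts l (fun h => hl (Finset.mem_erase.mpr ⟨hlj, h⟩))]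
    · calc ∑ l, t l * (a l m - a j m) * a l n
          = ∑ l, t l * a l m * a l n - a j m * ∑ l, t l * a l n := by
            rw [Finset.mul_sum, ← Finset.sum_sub_distrib]
            exact Finset.sum_congr rfl fun _ _ => by ring
        _ = 0 := by rw [sum_mul_coeff_mul_eq_zero hhecke ht hm hn, ht n hn, mul_zero, sub_zero]
  simpa [hi, sub_eq_zero, hmij] using congrFun hsmaller i

end HeckeRelations

theorem IsNormalizedEigenform.eq_zero_of_sum_mul_coeff_eq_zero {k : ℤ} {ι : Type*} [Fintype ι]
    {g : ι → CuspForm (Gamma 1) k} {a : ι → ℕ → ℂ}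
    (heig : ∀ i, IsNormalizedEigenform k (g i) (a i)) (hg : Function.Injective g)
    (t : ι → ℂ) (ht : ∀ n, 0 < n → ∑ i, t i * a i n = 0) : t = 0 := by
  refine _root_.eq_zero_of_sum_mul_coeff_eq_zero (fun i => (heig i).normalized)
    (fun i => (heig i).hecke) (fun i j hij => ?_) t ht
  by_contra! h
  exact hij (hg (CuspForm.eq_of_coeff_eq (heig i).fourier (heig j).fourier
    fun n hn => h n (Nat.pos_of_ne_zero hn)))

section LinearSystems

variable {K L ι κ : Type*} [Field K] [Field L] [Algebra K L] [Fintype ι]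

theorem exists_algebraMap_eq_of_unique_solution (A : ι → κ → K) (b : κ → K) (c : ι → L)
    (hc : ∀ n, ∑ i, c i * algebraMap K L (A i n) = algebraMap K L (b n))
    (huniq : ∀ t : ι → L, (∀ n, ∑ i, t i * algebraMap K L (A i n) = 0) → t = 0) :
    ∃ c' : ι → K, (∀ n, ∑ i, c' i * A i n = b n) ∧ ∀ i, algebraMap K L (c' i) = c i := by
  obtain ⟨φ, hφ⟩ : ∃ φ : Module.Dual K L, φ 1 ≠ 0 := by
    by_contra! h
    exact one_ne_zero ((Module.forall_dual_apply_eq_zero_iff K (1 : L)).mp h)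
  -- Applying a `K`-linear functional to the system yields a solution over `K`.
  have hφc : ∀ n, ∑ i, φ (c i) / φ 1 * A i n = b n := fun n => by
    have := congrArg φ (hc n)
    rw [Algebra.algebraMap_eq_smul_one, map_smul, smul_eq_mul, map_sum] at this
    simp only [mul_comm (c _), ← Algebra.smul_def, map_smul, smul_eq_mul] at this
    calc ∑ i, φ (c i) / φ 1 * A i n = (∑ i, A i n * φ (c i)) / φ 1 := by
          rw [Finset.sum_div]
          exact Finset.sum_congr rfl fun _ _ => by ring
      _ = b n := by rw [this, mul_div_cancel_right₀ _ hφ]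
  refine ⟨fun i => φ (c i) / φ 1, hφc, fun i => ?_⟩
  have h0 := huniq (fun i => algebraMap K L (φ (c i) / φ 1) - c i) fun n => by
    simp only [sub_mul, Finset.sum_sub_distrib, hc, ← map_mul, ← map_sum, hφc, sub_self]
  simpa [sub_eq_zero] using congrFun h0 i

theorem map_solution_eq_of_unique_solution (σ : K →+* K) (π : Equiv.Perm ι)
    (A : ι → κ → K) (b : κ → K) (c : ι → K) (hc : ∀ n, ∑ i, c i * A i n = b n)
    (huniq : ∀ t : ι → L, (∀ n, ∑ i, t i * algebraMap K L (A i n) = 0) → t = 0)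
    (hσb : ∀ n, σ (b n) = b n) (hσA : ∀ m n, σ (A m n) = A (π m) n) (m : ι) :
    σ (c m) = c (π m) := by
  have hσc : ∀ n, ∑ i, σ (c (π.symm i)) * A i n = b n := fun n => by
    rw [← Equiv.sum_comp π, ← hσb, ← hc, map_sum]
    simp [hσA]
  have h0 := huniq (fun i => algebraMap K L (σ (c (π.symm i)) - c i)) fun n => by
    simp only [← map_mul, ← map_sum, sub_mul, Finset.sum_sub_distrib, hσc, hc, sub_self, map_zero]
  simpa [sub_eq_zero] using congrFun h0 (π m)

end LinearSystems

theorem apply_sum_smul_eq_of_pairwise_orthogonal {ι E : Type*} [Fintype ι] [AddCommMonoid E]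
    [SMul ℂ E] (P : E → E → ℂ) (hPadd : ∀ x y w, P (x + y) w = P x w + P y w)
    (hPsmul : ∀ (c : ℂ) (x w : E), P (c • x) w = starRingEnd ℂ c * P x w)
    {v : ι → E} (horth : ∀ i j, i ≠ j → P (v i) (v j) = 0) (c : ι → ℂ) (i : ι) :
    P (∑ j, c j • v j) (v i) = starRingEnd ℂ (c i) * P (v i) (v i) := by
  let Pᵢ : E →+ ℂ := AddMonoidHom.mk' (P · (v i)) (fun x y => hPadd x y (v i))
  calc P (∑ j, c j • v j) (v i) = ∑ j, P (c j • v j) (v i) := map_sum Pᵢ _ _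
    _ = starRingEnd ℂ (c i) * P (v i) (v i) := by
      rw [Finset.sum_eq_single i (fun j _ hji => by rw [hPsmul, horth j i hji, mul_zero])
        (by simp), hPsmul]

theorem petersson_nonzero_of_transitive_stabilizer_general (k : ℤ) (d₁ d₂ : ℕ)
    (f : Fin d₁ → CuspForm (Gamma 1) k)
    (g : Fin d₂ → CuspForm (Gamma 1) (2 * k)) (ag : Fin d₂ → ℕ → ℂ)
    (heigg : ∀ i, IsNormalizedEigenform (2 * k) (g i) (ag i))
    (hlif : LinearIndependent ℂ f)
    (hlig : LinearIndependent ℂ g)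
    (i₀ : Fin d₁) (c : Fin d₂ → ℂ) (bsq : ℕ → ℂ)
    (hc : ∀ z : ℍ, (f i₀ z) ^ 2 = ∑ i : Fin d₂, c i * g i z)
    (hcoef : ∀ n : ℕ, bsq n = ∑ i : Fin d₂, c i * ag i n)
    (F : IntermediateField ℚ ℂ)
    (hmem_b : ∀ n, bsq n ∈ F) (hmem_g : ∀ i n, ag i n ∈ F)
    (htrans : ∀ i j : Fin d₂, ∃ (σ : F ≃ₐ[ℚ] F) (π : Equiv.Perm (Fin d₂)),
      (∀ n, (σ ⟨bsq n, hmem_b n⟩ : ℂ) = bsq n) ∧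
      (∀ m n, (σ ⟨ag m n, hmem_g m n⟩ : ℂ) = ag (π m) n) ∧ π i = j)
    (P : (ℍ → ℂ) → (ℍ → ℂ) → ℂ)
    (hPadd : ∀ x y w : ℍ → ℂ, P (x + y) w = P x w + P y w)
    (hPsmul : ∀ (c : ℂ) (x w : ℍ → ℂ), P (c • x) w = starRingEnd ℂ c * P x w)
    (hPorth : ∀ i j, i ≠ j → P ⇑(g i) ⇑(g j) = 0)
    (hPnd : ∀ i, P ⇑(g i) ⇑(g i) ≠ 0) :
    ∀ i, P ((⇑(f i₀)) ^ 2) ⇑(g i) ≠ 0 := by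
  intro i hi
  have huniq : ∀ t : Fin d₂ → ℂ, (∀ n, ∑ m, t m * ag m n = 0) → t = 0 := fun t ht =>
    IsNormalizedEigenform.eq_zero_of_sum_mul_coeff_eq_zero heigg hlig.injective t fun n _ => ht n
  have hcoe : ∀ x (hx : x ∈ F), algebraMap F ℂ ⟨x, hx⟩ = x := fun _ _ => rfl
  obtain ⟨cF, hcF_sol, hcF⟩ := exists_algebraMap_eq_of_unique_solution
    (fun m n => (⟨ag m n, hmem_g m n⟩ : F)) (fun n => ⟨bsq n, hmem_b n⟩) c
    (fun n => by simpa only [hcoe] using (hcoef n).symm)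
    (fun t ht => huniq t (by simpa only [hcoe] using ht))
  have hci : c i = 0 := by
    have hfg : ⇑(f i₀) ^ 2 = ∑ j, c j • ⇑(g j) := funext fun z => by simp [hc z]
    rw [hfg, apply_sum_smul_eq_of_pairwise_orthogonal P hPadd hPsmul hPorth] at hi
    simpa [hPnd i] using hi
  have hc_zero : ∀ j, c j = 0 := fun j => by
    obtain ⟨σ, π, hσb, hσg, hπ⟩ := htrans j i
    have hσc := map_solution_eq_of_unique_solution (σ : F →+* F) π _ _ cF hcF_sol
      (fun t ht => huniq t (by simpa only [hcoe] using ht))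
      (fun n => Subtype.ext (hσb n)) (fun m n => Subtype.ext (hσg m n)) j
    have hcFi : cF i = 0 := (algebraMap F ℂ).injective (by rw [hcF, hci, map_zero])
    rw [hπ, hcFi, map_eq_zero_iff _ (σ : F →+* F).injective] at hσc
    rw [← hcF j, hσc, map_zero]
  exact hlif.ne_zero i₀ (CuspForm.ext fun z => by simpa [hc_zero] using hc z)

/-- Let `f = f_{i₀}` be a normalized Hecke eigenform of weight `k` for `SL₂(ℤ)` and let
`g₁, …, g_{d₂}` be the normalized Hecke eigenbasis of `S_{2k}`, with all relevant Fourier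
coefficients lying in the composite `F = F₁F₂` of the Hecke fields.  Suppose the
stabilizer of `f²` in `Gal(F/ℚ)` acts transitively on `{g₁, …, g_{d₂}}` (each such Galois
element permuting the eigenforms via their `q`-expansions).  If `P` is the Petersson inner
product (conjugate-linear in its first argument, with the `g_i` pairwise orthogonal and
`P(g_i, g_i) ≠ 0`), then `⟨f², g_i⟩ ≠ 0` for every `i`. -/
theorem petersson_nonzero_of_transitive_stabilizer (k : ℤ) (d₁ d₂ : ℕ)
    (hd₁ : d₁ = Module.finrank ℂ (CuspForm (Gamma 1) k))
    (hd₂ : d₂ = Module.finrank ℂ (CuspForm (Gamma 1) (2 * k)))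
    (f : Fin d₁ → CuspForm (Gamma 1) k) (af : Fin d₁ → ℕ → ℂ)
    (g : Fin d₂ → CuspForm (Gamma 1) (2 * k)) (ag : Fin d₂ → ℕ → ℂ)
    (heigf : ∀ i, IsNormalizedEigenform k (f i) (af i))
    (heigg : ∀ i, IsNormalizedEigenform (2 * k) (g i) (ag i))
    (hlif : LinearIndependent ℂ f) (hspanf : Submodule.span ℂ (Set.range f) = ⊤)
    (hlig : LinearIndependent ℂ g) (hspang : Submodule.span ℂ (Set.range g) = ⊤)
    (i₀ : Fin d₁) (c : Fin d₂ → ℂ) (bsq : ℕ → ℂ)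
    (hexp : ∀ z : ℍ, (f i₀ z) ^ 2 =
      ∑' n : ℕ, bsq n * Complex.exp (2 * Real.pi * Complex.I * n * z))
    (hc : ∀ z : ℍ, (f i₀ z) ^ 2 = ∑ i : Fin d₂, c i * g i z)
    (hcoef : ∀ n : ℕ, bsq n = ∑ i : Fin d₂, c i * ag i n)
    (F : IntermediateField ℚ ℂ) (hF : F = HeckeField af ⊔ HeckeField ag)
    (hmem_b : ∀ n, bsq n ∈ F) (hmem_g : ∀ i n, ag i n ∈ F)
    (htrans : ∀ i j : Fin d₂, ∃ (σ : F ≃ₐ[ℚ] F) (π : Equiv.Perm (Fin d₂)),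
      (∀ n, (σ ⟨bsq n, hmem_b n⟩ : ℂ) = bsq n) ∧
      (∀ m n, (σ ⟨ag m n, hmem_g m n⟩ : ℂ) = ag (π m) n) ∧ π i = j)
    (P : (ℍ → ℂ) → (ℍ → ℂ) → ℂ)
    (hPadd : ∀ x y w : ℍ → ℂ, P (x + y) w = P x w + P y w)
    (hPsmul : ∀ (c : ℂ) (x w : ℍ → ℂ), P (c • x) w = starRingEnd ℂ c * P x w)
    (hPorth : ∀ i j, i ≠ j → P ⇑(g i) ⇑(g j) = 0)
    (hPnd : ∀ i, P ⇑(g i) ⇑(g i) ≠ 0) :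
    ∀ i, P ((⇑(f i₀)) ^ 2) ⇑(g i) ≠ 0 :=
  petersson_nonzero_of_transitive_stabilizer_general k d₁ d₂ f g ag heigg hlif hlig i₀ c bsq hc
    hcoef F hmem_b hmem_g htrans P hPadd hPsmul hPorth hPnd
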